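/- Let I be a nonempty finite set of players with finite nonempty action sets A_i and utilities u_i : (∏_{j∈I} A_j) → ℝ, and let s* be a mixed strategy profile. Suppose for every player i there exists w_i ∈ ℝ such that U_i([a_i, s*_{-i}]) = w_i for every a_i in the support δ(s*_i), and U_i([b_i, s*_{-i}]) ≤ w_i for every b_i ∉ δ(s*_i). Then s* is a Nash equilibrium, i.e., U_i([s_i, s*_{-i}]) ≤ U_i(s*) = w_i for every player i and every mixed strategy s_i of player i. -/
import Mathlib


open Finset

/-- Expected utility of player `i` for the mixed strategy profile `s` in a finite game
with utilities `u`. -/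
noncomputable def expUtil {I : Type*} [Fintype I] [DecidableEq I]
    {A : I → Type*} [∀ i, Fintype (A i)]
    (u : I → (∀ j, A j) → ℝ) (s : ∀ i, A i → ℝ) (i : I) : ℝ :=
  ∑ a : ∀ j, A j, (∏ j, s j (a j)) * u i a

/-- The profile `[a, s_{-i}]`: player `i` plays the Dirac strategy at `a`, others play `s`. -/
noncomputable def pureAt {I : Type*} [DecidableEq I]
    {A : I → Type*} [∀ i, DecidableEq (A i)]
    (s : ∀ i, A i → ℝ) (i : I) (a : A i) : ∀ j, A j → ℝ :=
  Function.update s i (fun b => if b = a then (1 : ℝ) else 0)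

lemma prod_update_eq {I : Type*} [Fintype I] [DecidableEq I]
    {A : I → Type*} (s : ∀ i, A i → ℝ) (i : I) (t : A i → ℝ) (a : ∀ j, A j) :
    (∏ j, Function.update s i t j (a j)) = t (a i) * ∏ j ∈ univ.erase i, s j (a j) := by
  rw [← Finset.mul_prod_erase univ (fun j => Function.update s i t j (a j)) (mem_univ i)]
  simp only [Function.update_self]
  congr 1
  exact Finset.prod_congr rfl fun j hj => by
    rw [Function.update_of_ne (Finset.ne_of_mem_erase hj)]

lemma expUtil_update {I : Type*} [Fintype I] [DecidableEq I]
    {A : I → Type*} [∀ i, Fintype (A i)] [∀ i, DecidableEq (A i)]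
    (u : I → (∀ j, A j) → ℝ) (s : ∀ i, A i → ℝ) (i : I) (t : A i → ℝ) :
    expUtil u (Function.update s i t) i = ∑ b : A i, t b * expUtil u (pureAt s i b) i := by
  unfold expUtil pureAt
  simp only [prod_update_eq]
  simp only [Finset.mul_sum]
  rw [Finset.sum_comm]
  refine Finset.sum_congr rfl fun a _ => ?_
  rw [Finset.sum_eq_single (a i)]
  · simp [mul_assoc]
  · intro b _ hb
    simp [Ne.symm hb]
  · simp

/-- Sufficiency of the support conditions for a Nash equilibrium: if for every player `i`
there is a value `w i` such that every pure strategy in the support of `s*_i` has expected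
utility `w i` against `s*_{-i}` and every pure strategy outside the support has expected
utility at most `w i`, then `s*` is a Nash equilibrium and the equilibrium utility of
player `i` equals `w i`. -/
theorem nash_equilibrium_sufficient_conditions
    {I : Type*} [Fintype I] [DecidableEq I] [Nonempty I]
    {A : I → Type*} [∀ i, Fintype (A i)] [∀ i, DecidableEq (A i)] [∀ i, Nonempty (A i)]
    (u : I → (∀ j, A j) → ℝ) (s : ∀ i, A i → ℝ)
    (hpos : ∀ i a, 0 ≤ s i a) (hsum : ∀ i, ∑ a, s i a = 1)
    (w : I → ℝ)
    (hsupp : ∀ i, ∀ a : A i, 0 < s i a → expUtil u (pureAt s i a) i = w i)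
    (hout : ∀ i, ∀ b : A i, ¬ 0 < s i b → expUtil u (pureAt s i b) i ≤ w i) :
    ∀ i, expUtil u s i = w i ∧
      ∀ t : A i → ℝ, (∀ a, 0 ≤ t a) → (∑ a, t a = 1) →
        expUtil u (Function.update s i t) i ≤ expUtil u s i := by
  intro i
  have hs : expUtil u s i = w i := by
    have : Function.update s i (s i) = s := Function.update_eq_self i s
    calc expUtil u s i = expUtil u (Function.update s i (s i)) i := by rw [this]
      _ = ∑ b : A i, s i b * expUtil u (pureAt s i b) i := expUtil_update u s i (s i)
      _ = ∑ b : A i, s i b * w i := by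
          refine Finset.sum_congr rfl fun b _ => ?_
          rcases lt_or_eq_of_le (hpos i b) with h | h
          · rw [hsupp i b h]
          · rw [← h]; ring
      _ = w i := by rw [← Finset.sum_mul, hsum i, one_mul]
  refine ⟨hs, fun t ht hts => ?_⟩
  rw [hs, expUtil_update]
  calc ∑ b : A i, t b * expUtil u (pureAt s i b) i ≤ ∑ b : A i, t b * w i := by
        refine Finset.sum_le_sum fun b _ => ?_
        refine mul_le_mul_of_nonneg_left ?_ (ht b)
        rcases lt_or_ge 0 (s i b) with h | h
        · exact (hsupp i b h).le
        · exact hout i b (not_lt.mpr h)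
    _ = w i := by rw [← Finset.sum_mul, hts, one_mul]
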